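/- Let n ≥ 3. The sequence x_k = 1 - (n/(n-1))^k · n/(2(n-1)) tends to -∞ as k → ∞, and there exists a smallest integer K₀ ≥ 0 with x_{K₀} ≤ 1/n. Moreover 0 < x_{K₀} < 1/n, i.e. the value x_{K₀} lies strictly between 0 and 1/n. -/

import Mathlib

/-!
Write `r = n / (n - 1)`, so that `x k = 1 - r ^ (k + 1) / 2` and `r > 1`; hence `x → -∞`.
With `y j = 1 - r ^ j / 2` one has `y (j + 1) = r * (y j - 1 / n)`. Since `y 0 = 1 / 2 > 1 / n`,
the term preceding the first `x K₀ ≤ 1 / n` exceeds `1 / n`, so `x K₀ > 0`; and `x K₀ = 1 / n` would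
give `r ^ (K₀ + 2) = 2`, i.e. `n ^ m = 2 (n - 1) ^ m`, impossible as `n` is coprime to `n - 1`.
-/

open Filter

theorem Nat.pow_ne_two_mul_pow_of_coprime {a b m : ℕ} (ha : 3 ≤ a) (hab : a.Coprime b)
    (hm : m ≠ 0) : a ^ m ≠ 2 * b ^ m := by
  intro h
  have hdvd : a ^ m ∣ 2 := (hab.pow m m).dvd_of_dvd_mul_right (h ▸ dvd_refl _)
  have := Nat.le_of_dvd two_pos hdvd
  have := ha.trans (Nat.le_self_pow hm a)
  omega

theorem div_sub_one_pow_ne_two {n m : ℕ} (hn : 3 ≤ n) (hm : m ≠ 0) :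
    ((n : ℝ) / (n - 1)) ^ m ≠ 2 := by
  have hcop : n.Coprime (n - 1) :=
    (Nat.coprime_self_sub_right (by omega)).2 (Nat.coprime_one_right n)
  have hpos : (0 : ℝ) < n - 1 := by
    have : (3 : ℝ) ≤ n := by exact_mod_cast hn
    linarith
  rw [div_pow, Ne, div_eq_iff (pow_pos hpos m).ne']
  have hcast : ((n - 1 : ℕ) : ℝ) = n - 1 := by
    rw [Nat.cast_sub (by omega), Nat.cast_one]
  rw [← hcast]
  exact_mod_cast Nat.pow_ne_two_mul_pow_of_coprime hn hcop hm

theorem one_sub_pow_succ_div_two {n : ℝ} (hn : n ≠ 0) (hn₁ : n - 1 ≠ 0) (j : ℕ) :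
    1 - (n / (n - 1)) ^ (j + 1) / 2 = n / (n - 1) * (1 - (n / (n - 1)) ^ j / 2 - 1 / n) := by
  rw [pow_succ]
  field_simp
  ring

theorem tendsto_one_sub_pow_div_two_atBot {r : ℝ} (hr : 1 < r) :
    Tendsto (fun j : ℕ => 1 - r ^ j / 2) atTop atBot :=
  tendsto_atBot_add_const_left _ 1 <| tendsto_neg_atTop_atBot.comp <|
    (tendsto_pow_atTop_atTop_of_one_lt hr).atTop_div_const two_pos

theorem bootstrap_terminal_exponent (n : ℕ) (hn : 3 ≤ n)
    (x : ℕ → ℝ) (hx : ∀ k, x k = 1 - ((n : ℝ) / (n - 1)) ^ k * (n / (2 * (n - 1)))) :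
    Filter.Tendsto x Filter.atTop Filter.atBot ∧
    ∃ K₀ : ℕ, (x K₀ ≤ 1 / n ∧ ∀ k < K₀, ¬ x k ≤ 1 / n) ∧
      0 < x K₀ ∧ x K₀ < 1 / n := by
  have hn' : (3 : ℝ) ≤ n := by exact_mod_cast hn
  have hn₁ : (0 : ℝ) < n - 1 := by linarith
  have hxy : ∀ k, x k = 1 - ((n : ℝ) / (n - 1)) ^ (k + 1) / 2 := fun k => by
    rw [hx, pow_succ]
    field_simp
  have htend : Tendsto x atTop atBot :=
    ((tendsto_one_sub_pow_div_two_atBot ((one_lt_div hn₁).2 (by linarith))).comp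
      (tendsto_add_atTop_nat 1)).congr fun k => (hxy k).symm
  have hex : ∃ k, x k ≤ 1 / n := (htend.eventually (eventually_le_atBot _)).exists
  obtain ⟨K₀, hK₀, hmin⟩ : ∃ K, x K ≤ 1 / n ∧ ∀ k < K, ¬ x k ≤ 1 / n :=
    ⟨Nat.find hex, Nat.find_spec hex, fun k hk => Nat.find_min hex hk⟩
  have hstep := one_sub_pow_succ_div_two (n := n) (by positivity) hn₁.ne'
  refine ⟨htend, K₀, ⟨hK₀, hmin⟩, ?_, ?_⟩
  · have hprev : 1 / (n : ℝ) < 1 - ((n : ℝ) / (n - 1)) ^ K₀ / 2 := by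
      rcases h : K₀ with _ | k
      · rw [div_lt_iff₀ (by positivity)]
        norm_num
        linarith
      · rw [← hxy]
        exact not_le.1 (hmin k (by omega))
    rw [hxy, hstep]
    exact mul_pos (by positivity) (sub_pos.2 hprev)
  · refine hK₀.lt_of_ne fun heq => div_sub_one_pow_ne_two hn (K₀ + 1).add_one_ne_zero ?_
    have h := hstep (K₀ + 1)
    rw [← hxy K₀, heq, sub_self, mul_zero] at h
    linarith
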